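/- arXiv:2001.11758 — 3 statements merged into one kernel-verified Lean document; each statement's English description precedes it below -/
import Mathlib

section
/- Assume α_T = ∑_t ℓ_{0,t} > 0. Then the optimal charging cost V is continuously differentiable on [0, ∞) (even though it is defined piecewise on the intervals determined by the energy thresholds), and consequently the charging unit price λ_e(L_e) = V(L_e)/(L_e + α_T) is continuously differentiable on [0, ∞). -/
/-!
For a water level `μ ≥ 0` let `m(μ)` be the energy charged by `waterFill` at that level. By the
tangent-line inequality for `x ↦ x ^ n`, the water-filling profile minimises the cost among all
profiles with the same total energy, so `V(m(μ))` is its cost, and comparing the optimal profiles at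
two levels gives `(m(ν) - m(μ)) n μ ≤ V(m(ν)) - V(m(μ))`. Above the smallest marginal cost at the
nonflexible loads, `m` is continuous, strictly increasing and onto `[0, ∞)`, so the level `w(L)`
needed for energy `L` depends continuously on `L`. The two-sided bound
`n w(a) (b - a) ≤ V(b) - V(a) ≤ n w(b) (b - a)` for `a ≤ b` then shows `V' = n w`, which is
continuous, and the quotient rule handles `λ_e`.
-/

open Finset

/-- Total electricity cost of a charging profile `ℓe` over time slots `1,…,T`,
with cost functions `f_t(ℓ) = η_t ℓ^n`. -/
noncomputable def chargCost (T : ℕ) (n : ℝ) (η ℓ0 ℓe : ℕ → ℝ) : ℝ :=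
  ∑ t ∈ Finset.Icc 1 T, η t * (ℓ0 t + ℓe t) ^ n

/-- Feasibility of a charging profile: nonnegative, and summing to the charging need `Le`. -/
def ChargFeasible (T : ℕ) (Le : ℝ) (ℓe : ℕ → ℝ) : Prop :=
  (∀ t ∈ Finset.Icc 1 T, 0 ≤ ℓe t) ∧ ∑ t ∈ Finset.Icc 1 T, ℓe t = Le

/-- Optimal charging cost `V(L_e)`. -/
noncomputable def Vopt (T : ℕ) (n : ℝ) (η ℓ0 : ℕ → ℝ) (Le : ℝ) : ℝ :=
  sInf {c | ∃ ℓe, ChargFeasible T Le ℓe ∧ chargCost T n η ℓ0 ℓe = c}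

/-- Cumulative nonflexible load `α_t = ∑_{s=1}^t ℓ_{0,s}`. -/
noncomputable def alphaC (ℓ0 : ℕ → ℝ) (t : ℕ) : ℝ := ∑ s ∈ Finset.Icc 1 t, ℓ0 s

/-- Cost of the nonflexible load after time `t`: `β_t = ∑_{s=t+1}^T f_s(ℓ_{0,s})`. -/
noncomputable def betaC (T : ℕ) (n : ℝ) (η ℓ0 : ℕ → ℝ) (t : ℕ) : ℝ :=
  ∑ s ∈ Finset.Icc (t + 1) T, η s * ℓ0 s ^ n

/-- Energy thresholds `L_e^{(t)}` (for `0 ≤ t ≤ T-1`, with `L_e^{(0)} = 0`). -/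
noncomputable def Lth (n : ℝ) (η ℓ0 : ℕ → ℝ) (t : ℕ) : ℝ :=
  if t = 0 then 0
  else (∑ s ∈ Finset.Icc 1 t, (η (t + 1) / η s) ^ (1 / (n - 1))) * ℓ0 (t + 1) - alphaC ℓ0 t

/-- Charging unit price `λ_e(L_e) = V(L_e) / (L_e + α_T)`. -/
noncomputable def lamE (T : ℕ) (n : ℝ) (η ℓ0 : ℕ → ℝ) (Le : ℝ) : ℝ :=
  Vopt T n η ℓ0 Le / (Le + alphaC ℓ0 T)

open Filter Topology

lemma rpow_tangent_le_rpow {n a b : ℝ} (hn : 1 < n) (ha : 0 ≤ a) (hb : 0 ≤ b) :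
    b ^ n + n * b ^ (n - 1) * (a - b) ≤ a ^ n := by
  rcases hb.eq_or_lt with rfl | hb
  · rw [Real.zero_rpow (by linarith), Real.zero_rpow (by linarith)]
    simpa using Real.rpow_nonneg ha n
  have key := one_add_mul_self_le_rpow_one_add
    (by linarith [div_nonneg ha hb.le] : -1 ≤ a / b - 1) hn.le
  rw [add_sub_cancel, Real.div_rpow ha hb.le, le_div_iff₀ (by positivity)] at key
  calc b ^ n + n * b ^ (n - 1) * (a - b) = (1 + n * (a / b - 1)) * b ^ n := by
        rw [Real.rpow_sub_one hb.ne']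
        field_simp
    _ ≤ a ^ n := key

lemma StrictMonoOn.continuousOn_invFunOn {α β : Type*} [LinearOrder α] [TopologicalSpace α]
    [OrderTopology α] [Nonempty α] [LinearOrder β] [TopologicalSpace β] [OrderTopology β]
    {f : α → β} {s : Set α} {t : Set β} [s.OrdConnected] [t.OrdConnected]
    (hf : StrictMonoOn f s) (hst : f '' s = t) : ContinuousOn (Function.invFunOn f s) t := by
  subst hst
  rw [continuousOn_iff_continuous_domRestrict]
  set e := hf.orderIso f s
  suffices (f '' s).domRestrict (Function.invFunOn f s) = Subtype.val ∘ e.symm by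
    rw [this]
    exact continuous_subtype_val.comp e.symm.continuous
  funext y
  have hy : ∃ x ∈ s, f x = y := y.2
  refine hf.injOn (Function.invFunOn_mem hy) (e.symm y).2 ?_
  rw [Function.invFunOn_eq hy]
  exact congrArg Subtype.val (e.apply_symm_apply y).symm

lemma hasDerivWithinAt_of_mul_sub_le_sub {f g : ℝ → ℝ} {s : Set ℝ} {x : ℝ} (hx : x ∈ s)
    (hg : ContinuousWithinAt g s x) (hfg : ∀ a ∈ s, ∀ b ∈ s, (b - a) * g a ≤ f b - f a) :
    HasDerivWithinAt f (g x) s x := by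
  rw [hasDerivWithinAt_iff_isLittleO]
  have hsmall : (fun y => (y - x) * (g y - g x)) =o[𝓝[s] x] fun y => y - x := by
    have hg0 : Tendsto (fun y => g y - g x) (𝓝[s] x) (𝓝 0) := by
      simpa using (hg : Tendsto g _ _).sub_const (g x)
    simpa using (Asymptotics.isBigO_refl (fun y => y - x) _).mul_isLittleO
      ((Asymptotics.isLittleO_one_iff ℝ).mpr hg0)
  -- applying `hfg` in both directions squeezes the remainder between `0` and `(y - x) (g y - g x)`
  refine (Asymptotics.IsBigO.of_bound 1 ?_).trans_isLittleO hsmall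
  filter_upwards [self_mem_nhdsWithin] with y hy
  have hlow := hfg x hx y hy
  have hupp := hfg y hy x hx
  rw [one_mul, Real.norm_eq_abs, Real.norm_eq_abs, smul_eq_mul,
    abs_of_nonneg (by linarith)]
  exact le_abs.mpr (Or.inl (by linarith))

/-- Charge slot `t` up to the total load at which its marginal cost `n η_t ℓ^(n-1)` equals `n μ`. -/
noncomputable def waterFill (n : ℝ) (η ℓ0 : ℕ → ℝ) (μ : ℝ) (t : ℕ) : ℝ :=
  max 0 ((μ / η t) ^ (n - 1)⁻¹ - ℓ0 t)

noncomputable def waterFillLoad (T : ℕ) (n : ℝ) (η ℓ0 : ℕ → ℝ) (μ : ℝ) : ℝ :=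
  ∑ t ∈ Finset.Icc 1 T, waterFill n η ℓ0 μ t

section WaterFilling

variable {T : ℕ} {n : ℝ} {η ℓ0 : ℕ → ℝ} {μ ν : ℝ} {t : ℕ}

lemma waterFill_nonneg : 0 ≤ waterFill n η ℓ0 μ t := le_max_left _ _

lemma waterFillLoad_nonneg : 0 ≤ waterFillLoad T n η ℓ0 μ :=
  Finset.sum_nonneg fun _ _ => waterFill_nonneg

lemma rpow_inv_div_le_iff (hn : 1 < n) (hηt : 0 < η t) (hμ : 0 ≤ μ) {ℓ : ℝ} (hℓ : 0 ≤ ℓ) :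
    (μ / η t) ^ (n - 1)⁻¹ ≤ ℓ ↔ μ ≤ η t * ℓ ^ (n - 1) := by
  rw [Real.rpow_inv_le_iff_of_pos (div_nonneg hμ hηt.le) hℓ (by linarith), div_le_iff₀' hηt]

lemma le_rpow_inv_div_iff (hn : 1 < n) (hηt : 0 < η t) (hμ : 0 ≤ μ) {ℓ : ℝ} (hℓ : 0 ≤ ℓ) :
    ℓ ≤ (μ / η t) ^ (n - 1)⁻¹ ↔ η t * ℓ ^ (n - 1) ≤ μ := by
  rw [Real.le_rpow_inv_iff_of_pos hℓ (div_nonneg hμ hηt.le) (by linarith), le_div_iff₀' hηt]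

lemma waterFill_eq_zero (hn : 1 < n) (hηt : 0 < η t) (hℓ0t : 0 ≤ ℓ0 t) (hμ : 0 ≤ μ)
    (hμt : μ ≤ η t * ℓ0 t ^ (n - 1)) : waterFill n η ℓ0 μ t = 0 :=
  max_eq_left (sub_nonpos.mpr ((rpow_inv_div_le_iff hn hηt hμ hℓ0t).mpr hμt))

lemma waterFill_mono (hn : 1 < n) (hηt : 0 < η t) (hμ : 0 ≤ μ) (hμν : μ ≤ ν) :
    waterFill n η ℓ0 μ t ≤ waterFill n η ℓ0 ν t := by
  unfold waterFill
  gcongr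

lemma waterFill_strictMonoOn (hn : 1 < n) (hηt : 0 < η t) (hℓ0t : 0 ≤ ℓ0 t) :
    StrictMonoOn (waterFill n η ℓ0 · t) (Set.Ici (η t * ℓ0 t ^ (n - 1))) := by
  have hfill : ∀ κ, η t * ℓ0 t ^ (n - 1) ≤ κ →
      waterFill n η ℓ0 κ t = (κ / η t) ^ (n - 1)⁻¹ - ℓ0 t := fun κ hκ =>
    max_eq_right (sub_nonneg.mpr
      ((le_rpow_inv_div_iff hn hηt (le_trans (by positivity) hκ) hℓ0t).mpr hκ))
  intro μ hμ ν hν hμν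
  dsimp only
  rw [hfill μ hμ, hfill ν hν]
  gcongr
  exact div_nonneg (le_trans (by positivity) hμ) hηt.le

lemma continuous_waterFillLoad (hn : 1 < n) : Continuous (waterFillLoad T n η ℓ0) := by
  have hp : Continuous fun x : ℝ => x ^ (n - 1)⁻¹ :=
    Real.continuous_rpow_const (inv_nonneg.mpr (by linarith))
  exact continuous_finsetSum _ fun t _ =>
    continuous_const.max ((hp.comp (continuous_id.div_const _)).sub continuous_const)

lemma tendsto_waterFillLoad_atTop (hn : 1 < n) (ht : t ∈ Finset.Icc 1 T) (hηt : 0 < η t) :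
    Tendsto (waterFillLoad T n η ℓ0) atTop atTop := by
  have hslot : Tendsto (fun μ => (μ / η t) ^ (n - 1)⁻¹ - ℓ0 t) atTop atTop :=
    tendsto_atTop_add_const_right _ _
      ((tendsto_rpow_atTop (inv_pos.mpr (by linarith))).comp
        (tendsto_id.atTop_div_const hηt))
  refine tendsto_atTop_mono (fun μ => ?_) hslot
  exact (le_max_right _ _).trans
    (Finset.single_le_sum (f := (waterFill n η ℓ0 μ ·)) (fun _ _ => waterFill_nonneg) ht)

lemma waterFillLoad_strictMonoOn (hn : 1 < n) (hη : ∀ t ∈ Finset.Icc 1 T, 0 < η t)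
    (hℓ0 : ∀ t ∈ Finset.Icc 1 T, 0 ≤ ℓ0 t) (ht : t ∈ Finset.Icc 1 T) :
    StrictMonoOn (waterFillLoad T n η ℓ0) (Set.Ici (η t * ℓ0 t ^ (n - 1))) := by
  intro μ hμ ν hν hμν
  have hμ0 : 0 ≤ μ := le_trans (mul_nonneg (hη t ht).le (by have := hℓ0 t ht; positivity)) hμ
  exact Finset.sum_lt_sum (fun s hs => waterFill_mono hn (hη s hs) hμ0 hμν.le)
    ⟨t, ht, waterFill_strictMonoOn hn (hη t ht) (hℓ0 t ht) hμ hν hμν⟩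

lemma chargCost_waterFill_add_le (hn : 1 < n) (hη : ∀ t ∈ Finset.Icc 1 T, 0 < η t)
    (hℓ0 : ∀ t ∈ Finset.Icc 1 T, 0 ≤ ℓ0 t) (hμ : 0 ≤ μ) {y : ℕ → ℝ}
    (hy : ∀ t ∈ Finset.Icc 1 T, 0 ≤ y t) :
    chargCost T n η ℓ0 (waterFill n η ℓ0 μ)
        + n * μ * (∑ t ∈ Finset.Icc 1 T, y t - waterFillLoad T n η ℓ0 μ)
      ≤ chargCost T n η ℓ0 y := by
  rw [waterFillLoad, ← Finset.sum_sub_distrib, Finset.mul_sum, chargCost, chargCost,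
    ← Finset.sum_add_distrib]
  refine Finset.sum_le_sum fun t ht => ?_
  have hηt := hη t ht
  have hℓ0t := hℓ0 t ht
  have hyt := hy t ht
  set A := (μ / η t) ^ (n - 1)⁻¹
  have hA : 0 ≤ A := by positivity
  have hηA : η t * A ^ (n - 1) = μ := by
    rw [← Real.rpow_mul (div_nonneg hμ hηt.le), inv_mul_cancel₀ (by linarith), Real.rpow_one,
      mul_div_cancel₀ _ hηt.ne']
  rcases le_total A (ℓ0 t) with hAℓ | hℓA
  · have hμt : μ ≤ η t * ℓ0 t ^ (n - 1) := (rpow_inv_div_le_iff hn hηt hμ hℓ0t).mp hAℓ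
    rw [waterFill_eq_zero hn hηt hℓ0t hμ hμt, add_zero, sub_zero]
    calc η t * ℓ0 t ^ n + n * μ * y t
        ≤ η t * ℓ0 t ^ n + n * (η t * ℓ0 t ^ (n - 1)) * y t := by gcongr
      _ = η t * (ℓ0 t ^ n + n * ℓ0 t ^ (n - 1) * (ℓ0 t + y t - ℓ0 t)) := by ring
      _ ≤ η t * (ℓ0 t + y t) ^ n := by
        gcongr
        exact rpow_tangent_le_rpow hn (by linarith) hℓ0t
  · rw [waterFill, max_eq_right (sub_nonneg.mpr hℓA), add_sub_cancel]
    calc η t * A ^ n + n * μ * (y t - (A - ℓ0 t))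
        = η t * (A ^ n + n * A ^ (n - 1) * (ℓ0 t + y t - A)) := by rw [← hηA]; ring
      _ ≤ η t * (ℓ0 t + y t) ^ n := by
        gcongr
        exact rpow_tangent_le_rpow hn (by linarith) hA

lemma Vopt_waterFillLoad (hn : 1 < n) (hη : ∀ t ∈ Finset.Icc 1 T, 0 < η t)
    (hℓ0 : ∀ t ∈ Finset.Icc 1 T, 0 ≤ ℓ0 t) (hμ : 0 ≤ μ) :
    Vopt T n η ℓ0 (waterFillLoad T n η ℓ0 μ) = chargCost T n η ℓ0 (waterFill n η ℓ0 μ) := by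
  refine IsLeast.csInf_eq ⟨⟨_, ⟨fun _ _ => waterFill_nonneg, rfl⟩, rfl⟩, ?_⟩
  rintro _ ⟨y, ⟨hy, hysum⟩, rfl⟩
  simpa [hysum] using chargCost_waterFill_add_le hn hη hℓ0 hμ hy

lemma mul_sub_le_Vopt_waterFillLoad_sub (hn : 1 < n) (hη : ∀ t ∈ Finset.Icc 1 T, 0 < η t)
    (hℓ0 : ∀ t ∈ Finset.Icc 1 T, 0 ≤ ℓ0 t) (hμ : 0 ≤ μ) (hν : 0 ≤ ν) :
    (waterFillLoad T n η ℓ0 ν - waterFillLoad T n η ℓ0 μ) * (n * μ)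
      ≤ Vopt T n η ℓ0 (waterFillLoad T n η ℓ0 ν) - Vopt T n η ℓ0 (waterFillLoad T n η ℓ0 μ) := by
  rw [Vopt_waterFillLoad hn hη hℓ0 hμ, Vopt_waterFillLoad hn hη hℓ0 hν]
  have := chargCost_waterFill_add_le hn hη hℓ0 hμ (y := waterFill n η ℓ0 ν)
    fun _ _ => waterFill_nonneg
  rw [← waterFillLoad] at this
  linarith

lemma exists_continuousOn_waterLevel (hn : 1 < n) (hη : ∀ t ∈ Finset.Icc 1 T, 0 < η t)
    (hℓ0 : ∀ t ∈ Finset.Icc 1 T, 0 ≤ ℓ0 t) (hT : (Finset.Icc 1 T).Nonempty) :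
    ∃ w : ℝ → ℝ, ContinuousOn w (Set.Ici 0) ∧
      ∀ L ∈ Set.Ici (0 : ℝ), 0 ≤ w L ∧ waterFillLoad T n η ℓ0 (w L) = L := by
  obtain ⟨t, ht, hmin⟩ := (Finset.Icc 1 T).exists_min_image (fun t => η t * ℓ0 t ^ (n - 1)) hT
  have hμ0 : 0 ≤ η t * ℓ0 t ^ (n - 1) :=
    mul_nonneg (hη t ht).le (by have := hℓ0 t ht; positivity)
  have hzero : waterFillLoad T n η ℓ0 (η t * ℓ0 t ^ (n - 1)) = 0 :=
    Finset.sum_eq_zero fun s hs => waterFill_eq_zero hn (hη s hs) (hℓ0 s hs) hμ0 (hmin s hs)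
  have hmono := waterFillLoad_strictMonoOn hn hη hℓ0 ht
  have himage : waterFillLoad T n η ℓ0 '' Set.Ici (η t * ℓ0 t ^ (n - 1)) = Set.Ici 0 := by
    refine subset_antisymm (Set.image_subset_iff.mpr fun _ _ => waterFillLoad_nonneg) ?_
    rw [← hzero]
    exact intermediate_value_Ici (continuous_waterFillLoad hn).continuousOn
      (tendsto_waterFillLoad_atTop hn ht (hη t ht))
  refine ⟨Function.invFunOn (waterFillLoad T n η ℓ0) (Set.Ici (η t * ℓ0 t ^ (n - 1))),
    hmono.continuousOn_invFunOn himage, fun L hL => ?_⟩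
  rw [← himage] at hL
  exact ⟨hμ0.trans (Function.invFunOn_mem hL), Function.invFunOn_eq hL⟩

end WaterFilling

theorem Vopt_and_lamE_contDiff_general
    (T : ℕ) (n : ℝ) (η ℓ0 : ℕ → ℝ)
    (hn : (2 : ℝ) ≤ n)
    (hη : ∀ t ∈ Finset.Icc 1 T, 0 < η t)
    (hℓ0 : ∀ t ∈ Finset.Icc 1 T, 0 ≤ ℓ0 t)
    (hα : 0 < alphaC ℓ0 T) :
    ∃ V' lam' : ℝ → ℝ,
      ContinuousOn V' (Set.Ici 0) ∧ ContinuousOn lam' (Set.Ici 0) ∧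
      (∀ x ∈ Set.Ici (0 : ℝ), HasDerivWithinAt (Vopt T n η ℓ0) (V' x) (Set.Ici 0) x) ∧
      (∀ x ∈ Set.Ici (0 : ℝ), HasDerivWithinAt (lamE T n η ℓ0) (lam' x) (Set.Ici 0) x) := by
  have hn1 : 1 < n := by linarith
  obtain ⟨w, hw_cont, hw⟩ := exists_continuousOn_waterLevel hn1 hη hℓ0
    (Finset.nonempty_of_sum_ne_zero hα.ne')
  have hV' : ContinuousOn (fun x => n * w x) (Set.Ici 0) := continuousOn_const.mul hw_cont
  have hV : ∀ x ∈ Set.Ici (0 : ℝ), HasDerivWithinAt (Vopt T n η ℓ0) (n * w x) (Set.Ici 0) x :=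
    fun x hx => hasDerivWithinAt_of_mul_sub_le_sub hx (hV' x hx) fun a ha b hb => by
      simpa only [(hw a ha).2, (hw b hb).2] using
        mul_sub_le_Vopt_waterFillLoad_sub hn1 hη hℓ0 (hw a ha).1 (hw b hb).1
  have hden : ∀ x ∈ Set.Ici (0 : ℝ), x + alphaC ℓ0 T ≠ 0 := fun x hx =>
    (add_pos_of_nonneg_of_pos hx hα).ne'
  have hVcont : ContinuousOn (Vopt T n η ℓ0) (Set.Ici 0) := fun x hx =>
    (hV x hx).continuousWithinAt
  refine ⟨fun x => n * w x,
    fun x => (n * w x * (x + alphaC ℓ0 T) - Vopt T n η ℓ0 x * 1) / (x + alphaC ℓ0 T) ^ 2,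
    hV', ?_, hV, fun x hx => (hV x hx).div ((hasDerivWithinAt_id x _).add_const _) (hden x hx)⟩
  exact ((hV'.mul (continuousOn_id.add continuousOn_const)).sub (hVcont.mul continuousOn_const)).div
    ((continuousOn_id.add continuousOn_const).pow 2) fun x hx => pow_ne_zero 2 (hden x hx)

/-- if `α_T = ∑_t ℓ_{0,t} > 0`, the optimal charging cost `V` is
continuously differentiable on `[0, ∞)`, hence so is the charging unit price
`λ_e(L_e) = V(L_e)/(L_e + α_T)`. -/
theorem Vopt_and_lamE_contDiff
    (T : ℕ) (n : ℝ) (η ℓ0 : ℕ → ℝ)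
    (hT : 2 ≤ T) (hn : (2 : ℝ) ≤ n)
    (hη : ∀ t ∈ Finset.Icc 1 T, 0 < η t)
    (hℓ0 : ∀ t ∈ Finset.Icc 1 T, 0 ≤ ℓ0 t)
    (hord : ∀ s t : ℕ, 1 ≤ s → s ≤ t → t ≤ T →
      η s * ℓ0 s ^ (n - 1) ≤ η t * ℓ0 t ^ (n - 1))
    (hα : 0 < alphaC ℓ0 T) :
    ∃ V' lam' : ℝ → ℝ,
      ContinuousOn V' (Set.Ici 0) ∧ ContinuousOn lam' (Set.Ici 0) ∧
      (∀ x ∈ Set.Ici (0 : ℝ), HasDerivWithinAt (Vopt T n η ℓ0) (V' x) (Set.Ici 0) x) ∧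
      (∀ x ∈ Set.Ici (0 : ℝ), HasDerivWithinAt (lamE T n η ℓ0) (lam' x) (Set.Ici 0) x) :=
  Vopt_and_lamE_contDiff_general T n η ℓ0 hn hη hℓ0 hα
end

section
/- Assume α_T = ∑_t ℓ_{0,t} > 0. Then the charging unit price λ_e is strictly increasing on (0, ∞) if and only if its (right) derivative at 0 satisfies λ_e′(0) ≥ 0. -/
open Finset

/-! The optimal cost `V` is strictly convex on `[0, ∞)`: it is attained (a continuous cost on a
compact set of profiles), and mixing optimal profiles for two demands is feasible for the mixed
demand and, by strict convexity of `ℓ ↦ η ℓ ^ n`, strictly cheaper. Write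
`V L = V 0 + L * s L` with `s` the secant slope of `V` from `0`, which is monotone and strictly
exceeds `V'(0)`. Then `λ_e` is squeezed below the Möbius map `L ↦ (V 0 + L s) / (L + α)`, which is
increasing once `V 0 < α s`, and `V 0 ≤ α V'(0)` is exactly `α² λ_e'(0) ≥ 0`. Conversely, a
monotone function has nonnegative one-sided derivative. -/

section ChargingCost

variable {T : ℕ} {n Le : ℝ} {η ℓ0 : ℕ → ℝ}

lemma ChargFeasible.indicator {m : ℕ → ℝ} (hm : ChargFeasible T Le m) :
    ChargFeasible T Le ((↑(Finset.Icc 1 T) : Set ℕ).indicator m) := by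
  refine ⟨fun t ht => ?_, ?_⟩
  · rw [Set.indicator_of_mem (Finset.mem_coe.2 ht)]
    exact hm.1 t ht
  · rw [← hm.2]
    exact Finset.sum_congr rfl fun t ht => Set.indicator_of_mem (Finset.mem_coe.2 ht) m

lemma chargCost_indicator (m : ℕ → ℝ) :
    chargCost T n η ℓ0 ((↑(Finset.Icc 1 T) : Set ℕ).indicator m) = chargCost T n η ℓ0 m :=
  Finset.sum_congr rfl fun t ht => by rw [Set.indicator_of_mem (Finset.mem_coe.2 ht)]

lemma chargFeasible_single (hT : 1 ≤ T) (hLe : 0 ≤ Le) :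
    ChargFeasible T Le (Pi.single 1 Le) := by
  refine ⟨fun t _ => ?_, ?_⟩
  · by_cases h : t = 1
    · subst h; simpa using hLe
    · simp [h]
  · simp [Finset.sum_pi_single', hT]

lemma isCompact_setOf_chargFeasible_of_support (T : ℕ) (Le : ℝ) :
    IsCompact {m : ℕ → ℝ | ChargFeasible T Le m ∧ ∀ t ∉ Finset.Icc 1 T, m t = 0} := by
  refine (isCompact_univ_pi fun _ => isCompact_Icc (a := 0) (b := Le)).of_isClosed_subset ?_ ?_
  · simp only [ChargFeasible, Set.ofPred_and, Set.ofPred_forall]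
    exact ((isClosed_biInter fun t _ => isClosed_le continuous_const (continuous_apply t)).inter
      (isClosed_eq (continuous_finsetSum _ fun t _ => continuous_apply t) continuous_const)).inter
      (isClosed_iInter fun t => isClosed_iInter fun _ => isClosed_eq (continuous_apply t)
        continuous_const)
  · rintro m ⟨⟨hnonneg, hsum⟩, hzero⟩ t -
    by_cases ht : t ∈ Finset.Icc 1 T
    · exact ⟨hnonneg t ht, hsum ▸ Finset.single_le_sum hnonneg ht⟩
    · rw [hzero t ht]
      exact ⟨le_rfl, hsum ▸ Finset.sum_nonneg hnonneg⟩

lemma continuous_chargCost (hn : 0 ≤ n) : Continuous (chargCost T n η ℓ0) :=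
  continuous_finsetSum _ fun t _ =>
    continuous_const.mul ((Real.continuous_rpow_const hn).comp
      (continuous_const.add (continuous_apply t)))

lemma isLeast_Vopt (hT : 1 ≤ T) (hn : 0 ≤ n) (hLe : 0 ≤ Le) :
    IsLeast {c | ∃ ℓe, ChargFeasible T Le ℓe ∧ chargCost T n η ℓ0 ℓe = c}
      (Vopt T n η ℓ0 Le) := by
  have hK : {m : ℕ → ℝ | ChargFeasible T Le m ∧ ∀ t ∉ Finset.Icc 1 T, m t = 0}.Nonempty :=
    ⟨Pi.single 1 Le, chargFeasible_single hT hLe, fun t ht =>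
      Pi.single_eq_of_ne (by rintro rfl; simp [hT] at ht) _⟩
  obtain ⟨m, hm, hmin⟩ := (isCompact_setOf_chargFeasible_of_support T Le).exists_isMinOn hK
    (continuous_chargCost hn).continuousOn
  have hleast : IsLeast {c | ∃ ℓe, ChargFeasible T Le ℓe ∧ chargCost T n η ℓ0 ℓe = c}
      (chargCost T n η ℓ0 m) := by
    refine ⟨⟨m, hm.1, rfl⟩, ?_⟩
    rintro _ ⟨m', hm', rfl⟩
    rw [← chargCost_indicator m']
    exact hmin ⟨hm'.indicator, fun t ht => Set.indicator_of_notMem (by simpa using ht) _⟩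
  rwa [Vopt, hleast.csInf_eq]

lemma chargCost_combo_lt (hn : 1 < n) (hη : ∀ t ∈ Finset.Icc 1 T, 0 < η t)
    (hℓ0 : ∀ t ∈ Finset.Icc 1 T, 0 ≤ ℓ0 t) {ma mb : ℕ → ℝ}
    (hma : ∀ t ∈ Finset.Icc 1 T, 0 ≤ ma t) (hmb : ∀ t ∈ Finset.Icc 1 T, 0 ≤ mb t)
    (hne : ∃ t ∈ Finset.Icc 1 T, ma t ≠ mb t) {a b : ℝ} (ha : 0 < a) (hb : 0 < b)
    (hab : a + b = 1) :
    chargCost T n η ℓ0 (a • ma + b • mb) <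
      a * chargCost T n η ℓ0 ma + b * chargCost T n η ℓ0 mb := by
  have hload : ∀ t, ℓ0 t + (a • ma + b • mb) t = a • (ℓ0 t + ma t) + b • (ℓ0 t + mb t) := by
    intro t
    simp only [Pi.add_apply, Pi.smul_apply, smul_eq_mul]
    linear_combination ℓ0 t * hab.symm
  obtain ⟨t₀, ht₀, hne₀⟩ := hne
  simp only [chargCost, Finset.mul_sum, ← Finset.sum_add_distrib, hload]
  refine Finset.sum_lt_sum (fun t ht => ?_) ⟨t₀, ht₀, ?_⟩
  · have h := (convexOn_rpow hn.le).2 (add_nonneg (hℓ0 t ht) (hma t ht))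
      (add_nonneg (hℓ0 t ht) (hmb t ht)) ha.le hb.le hab
    rw [smul_eq_mul, smul_eq_mul] at h
    calc _ ≤ η t * (a * (ℓ0 t + ma t) ^ n + b * (ℓ0 t + mb t) ^ n) :=
          mul_le_mul_of_nonneg_left h (hη t ht).le
      _ = _ := by ring
  · have h := (strictConvexOn_rpow hn).2 (add_nonneg (hℓ0 t₀ ht₀) (hma t₀ ht₀))
      (add_nonneg (hℓ0 t₀ ht₀) (hmb t₀ ht₀)) (by simpa using hne₀) ha hb hab
    rw [smul_eq_mul, smul_eq_mul] at h
    calc _ < η t₀ * (a * (ℓ0 t₀ + ma t₀) ^ n + b * (ℓ0 t₀ + mb t₀) ^ n) :=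
          mul_lt_mul_of_pos_left h (hη t₀ ht₀)
      _ = _ := by ring

theorem strictConvexOn_Vopt (hT : 1 ≤ T) (hn : 1 < n) (hη : ∀ t ∈ Finset.Icc 1 T, 0 < η t)
    (hℓ0 : ∀ t ∈ Finset.Icc 1 T, 0 ≤ ℓ0 t) :
    StrictConvexOn ℝ (Set.Ici 0) (Vopt T n η ℓ0) := by
  refine ⟨convex_Ici 0, fun x hx y hy hxy a b ha hb hab => ?_⟩
  have hleast {L : ℝ} (hL : 0 ≤ L) :=
    isLeast_Vopt (η := η) (ℓ0 := ℓ0) hT (zero_le_one.trans hn.le) hL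
  obtain ⟨mx, hmx, hVx⟩ := (hleast hx).1
  obtain ⟨my, hmy, hVy⟩ := (hleast hy).1
  have hfeas : ChargFeasible T (a • x + b • y) (a • mx + b • my) := by
    refine ⟨fun t ht => ?_, ?_⟩
    · simp only [Pi.add_apply, Pi.smul_apply, smul_eq_mul]
      exact add_nonneg (mul_nonneg ha.le (hmx.1 t ht)) (mul_nonneg hb.le (hmy.1 t ht))
    · simp only [Pi.add_apply, Pi.smul_apply, smul_eq_mul, Finset.sum_add_distrib,
        ← Finset.mul_sum, hmx.2, hmy.2]
  have hne : ∃ t ∈ Finset.Icc 1 T, mx t ≠ my t := by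
    by_contra! h
    exact hxy (hmx.2.symm.trans ((Finset.sum_congr rfl h).trans hmy.2))
  have hmix := (hleast (add_nonneg (smul_nonneg ha.le hx) (smul_nonneg hb.le hy))).2
    ⟨_, hfeas, rfl⟩
  rw [← hVx, ← hVy, smul_eq_mul, smul_eq_mul]
  exact hmix.trans_lt (chargCost_combo_lt hn hη hℓ0 hmx.1 hmy.1 hne ha hb hab)

end ChargingCost

section UnitPrice

variable {V : ℝ → ℝ} {α : ℝ}

lemma strictMonoOn_add_mul_div_add {c s : ℝ} (hcs : c < α * s) :
    StrictMonoOn (fun L => (c + L * s) / (L + α)) (Set.Ioi (-α)) := by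
  intro x hx y hy hxy
  have hx' : 0 < x + α := by linarith [Set.mem_Ioi.1 hx]
  have hy' : 0 < y + α := by linarith [Set.mem_Ioi.1 hy]
  rw [div_lt_div_iff₀ hx' hy']
  nlinarith [mul_pos (sub_pos.2 hxy) (sub_pos.2 hcs)]

theorem StrictConvexOn.strictMonoOn_div_add (hV : StrictConvexOn ℝ (Set.Ici 0) V)
    (hα : 0 < α) {p : ℝ} (hp : HasDerivWithinAt V p (Set.Ici 0) 0) (hVp : V 0 ≤ α * p) :
    StrictMonoOn (fun L => V L / (L + α)) (Set.Ioi 0) := by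
  have hsecant : ∀ L ≠ 0, V L = V 0 + L * slope V 0 L := by
    intro L hL
    rw [slope_def_field, sub_zero]
    field_simp
    ring
  intro x hx y hy hxy
  have hslope : slope V 0 x ≤ slope V 0 y :=
    hV.convexOn.slope_mono Set.self_mem_Ici ⟨Set.mem_Ici.2 hx.le, hx.ne'⟩
      ⟨Set.mem_Ici.2 hy.le, hy.ne'⟩ hxy.le
  have hderiv : p < slope V 0 y :=
    hV.lt_slope_of_hasDerivWithinAt Set.self_mem_Ici (Set.mem_Ici.2 hy.le) hy hp
  calc V x / (x + α) = (V 0 + x * slope V 0 x) / (x + α) := by rw [← hsecant x hx.ne']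
    _ ≤ (V 0 + x * slope V 0 y) / (x + α) := by
      gcongr
      · linarith [Set.mem_Ioi.1 hx]
      · exact hx.le
    _ < (V 0 + y * slope V 0 y) / (y + α) :=
      strictMonoOn_add_mul_div_add (hVp.trans_lt (by gcongr))
        ((neg_neg_of_pos hα).trans hx) ((neg_neg_of_pos hα).trans hy) hxy
    _ = V y / (y + α) := by rw [← hsecant y hy.ne']

theorem StrictConvexOn.strictMonoOn_div_add_iff (hV : StrictConvexOn ℝ (Set.Ici 0) V)
    (hα : 0 < α) {d : ℝ} (hd : HasDerivWithinAt (fun L => V L / (L + α)) d (Set.Ici 0) 0) :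
    StrictMonoOn (fun L => V L / (L + α)) (Set.Ioi 0) ↔ 0 ≤ d := by
  refine ⟨fun hmono => (hd.mono Set.Ioi_subset_Ici_self).nonneg_of_monotoneOn ?_
    hmono.monotoneOn, fun hd0 => hV.strictMonoOn_div_add hα (p := d * α + V 0 / α) ?_ ?_⟩
  · rw [accPt_principal_iff_nhdsWithin, Set.sdiff_singleton_eq_self Set.self_notMem_Ioi]
    infer_instance
  · have h := hd.mul ((hasDerivWithinAt_id 0 (Set.Ici 0)).add_const α)
    refine (h.congr_of_mem (fun L hL => ?_) Set.self_mem_Ici).congr_deriv (by simp)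
    exact (div_mul_cancel₀ _ (by linarith [Set.mem_Ici.1 hL])).symm
  · rw [mul_add, mul_div_cancel₀ _ hα.ne']
    nlinarith [mul_nonneg hd0 (mul_nonneg hα.le hα.le)]

end UnitPrice

theorem lamE_strictMono_iff_deriv_at_zero_nonneg_general
    (T : ℕ) (n : ℝ) (η ℓ0 : ℕ → ℝ)
    (hn : (2 : ℝ) ≤ n)
    (hη : ∀ t ∈ Finset.Icc 1 T, 0 < η t)
    (hℓ0 : ∀ t ∈ Finset.Icc 1 T, 0 ≤ ℓ0 t)
    (hα : 0 < alphaC ℓ0 T)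
    (d : ℝ) (hd : HasDerivWithinAt (lamE T n η ℓ0) d (Set.Ici 0) 0) :
    StrictMonoOn (lamE T n η ℓ0) (Set.Ioi 0) ↔ 0 ≤ d := by
  have hT : 1 ≤ T := Nat.one_le_iff_ne_zero.2 (by rintro rfl; simp [alphaC] at hα)
  exact (strictConvexOn_Vopt hT (by linarith) hη hℓ0).strictMonoOn_div_add_iff hα hd

/-- if `α_T > 0`, the charging unit price `λ_e` is strictly increasing
on `(0, ∞)` if and only if its right derivative at `0` is nonnegative. -/
theorem lamE_strictMono_iff_deriv_at_zero_nonneg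
    (T : ℕ) (n : ℝ) (η ℓ0 : ℕ → ℝ)
    (hT : 2 ≤ T) (hn : (2 : ℝ) ≤ n)
    (hη : ∀ t ∈ Finset.Icc 1 T, 0 < η t)
    (hℓ0 : ∀ t ∈ Finset.Icc 1 T, 0 ≤ ℓ0 t)
    (hord : ∀ s t : ℕ, 1 ≤ s → s ≤ t → t ≤ T →
      η s * ℓ0 s ^ (n - 1) ≤ η t * ℓ0 t ^ (n - 1))
    (hα : 0 < alphaC ℓ0 T)
    (d : ℝ) (hd : HasDerivWithinAt (lamE T n η ℓ0) d (Set.Ici 0) 0) :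
    StrictMonoOn (lamE T n η ℓ0) (Set.Ioi 0) ↔ 0 ≤ d :=
  lamE_strictMono_iff_deriv_at_zero_nonneg_general T n η ℓ0 hn hη hℓ0 hα d hd
end

section
/- Assume every travel-time function d_a is continuous and the charging unit price function λ_e : [0, ∞) → ℝ is continuous. Then a Wardrop Equilibrium exists, i.e., there is a feasible path-flow vector f* such that for each class s, each origin–destination pair k, and all paths r, r′ ∈ R_k with f*_{r,s} > 0, one has c_{r,s}(f*) ≤ c_{r′,s}(f*). -/
open Finset MeasureTheory

/-- The data of the multiclass (EV/GV) routing game with coupled charging.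
Vehicle classes are indexed by `Bool`: `true` is the electric class (e) and
`false` is the gasoline class (g). Paths are gathered in the type `R`, the
origin–destination pair of a path `r` being `od r` (so `R_k = od ⁻¹' {k}`). -/
structure RoutingGame where
  /-- arcs -/
  A : Type
  finA : Fintype A
  /-- paths -/
  R : Type
  finR : Fintype R
  /-- origin–destination pairs -/
  K : Type
  /-- the O-D pair of each path -/
  od : R → K
  /-- each O-D pair has at least one path -/
  od_surj : Function.Surjective od
  /-- arc lengths -/
  len : A → ℝ
  len_pos : ∀ a, 0 < len a
  /-- travel demands -/
  D : K → ℝ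
  D_nonneg : ∀ k, 0 ≤ D k
  /-- arc–path incidence `δ_{a,r} ∈ {0,1}` -/
  δ : A → R → ℝ
  δ_mem : ∀ a r, δ a r = 0 ∨ δ a r = 1
  /-- class shares `X_e, X_g` -/
  X : Bool → ℝ
  X_nonneg : ∀ s, 0 ≤ X s
  /-- energy consumptions per distance unit `m_e, m_g` -/
  m : Bool → ℝ
  m_pos : ∀ s, 0 < m s
  /-- travel-time (congestion) functions `d_a` -/
  d : A → ℝ → ℝ
  /-- tolls `t_{a,s}` -/
  toll : A → Bool → ℝ
  toll_nonneg : ∀ a s, 0 ≤ toll a s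
  /-- value of time `τ` -/
  τ : ℝ
  τ_pos : 0 < τ
  /-- (constant) gasoline unit price `λ_g` -/
  lamg : ℝ
  lamg_nonneg : 0 ≤ lamg
  /-- charging unit price function `λ_e` -/
  lame : ℝ → ℝ

attribute [instance] RoutingGame.finA RoutingGame.finR

namespace RoutingGame

variable (G : RoutingGame)

/-- Arc flow of class `s`: `x_{a,s} = ∑_r δ_{a,r} f_{r,s}`. -/
noncomputable def arcFlow (f : G.R → Bool → ℝ) (a : G.A) (s : Bool) : ℝ :=
  ∑ r, G.δ a r * f r s

/-- Total arc flow `x_a = x_{a,e} + x_{a,g}`. -/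
noncomputable def totFlow (f : G.R → Bool → ℝ) (a : G.A) : ℝ :=
  G.arcFlow f a true + G.arcFlow f a false

open scoped Classical in
/-- Feasible path flows: nonnegative and meeting the demand `X_s D_k` of each
O-D pair `k` for each class `s`. -/
def Feasible (f : G.R → Bool → ℝ) : Prop :=
  (∀ r s, 0 ≤ f r s) ∧
  ∀ (k : G.K) (s : Bool), (∑ r, if G.od r = k then f r s else 0) = G.X s * G.D k

/-- Aggregate energy need of class `s`: `L_s = m_s ∑_a x_{a,s} l_a`. -/
noncomputable def Lneed (f : G.R → Bool → ℝ) (s : Bool) : ℝ :=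
  G.m s * ∑ a, G.arcFlow f a s * G.len a

/-- Unit energy price of class `s` at flow `f`: `λ_e(L_e(f))` for EV, `λ_g` for GV. -/
noncomputable def price (f : G.R → Bool → ℝ) (s : Bool) : ℝ :=
  if s then G.lame (G.Lneed f true) else G.lamg

/-- Cost of path `r` for class `s` at flow `f`:
`c_{r,s}(f) = ∑_a δ_{a,r} (τ d_a(x_a) + t_{a,s} + l_a m_s λ_s)`. -/
noncomputable def cost (f : G.R → Bool → ℝ) (r : G.R) (s : Bool) : ℝ :=
  ∑ a, G.δ a r * (G.τ * G.d a (G.totFlow f a) + G.toll a s + G.len a * G.m s * G.price f s)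

/-- Wardrop Equilibrium: feasible, and for each class any used path is not more
costly than any other path with the same O-D pair. -/
def IsWE (f : G.R → Bool → ℝ) : Prop :=
  G.Feasible f ∧ ∀ (s : Bool) (r r' : G.R), G.od r = G.od r' → 0 < f r s →
    G.cost f r s ≤ G.cost f r' s

/-- The Beckmann function
`B(f) = τ ∑_a ∫_0^{x_a} d_a + ∑_{a,s} t_{a,s} x_{a,s} + ∫_0^{L_e(f)} λ_e + λ_g L_g(f)`. -/
noncomputable def Beckmann (f : G.R → Bool → ℝ) : ℝ :=
  G.τ * ∑ a, (∫ u in (0 : ℝ)..G.totFlow f a, G.d a u)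
    + ∑ a, ∑ s : Bool, G.toll a s * G.arcFlow f a s
    + (∫ u in (0 : ℝ)..G.Lneed f true, G.lame u)
    + G.lamg * G.Lneed f false

end RoutingGame

/-!
The Beckmann potential is continuous on the compact nonempty polytope of feasible flows, so it
attains its minimum there at some `f`. Its derivative at `f` in a direction `v` is
`∑ r, ∑ s, v r s * cost f r s`: the path costs are the gradient of the potential. Moving
`ε ≤ f r s` units of class `s` from a used path `r` to a path `r'` of the same O-D pair keeps
the flow feasible, so the derivative in that direction, `cost f r' s - cost f r s`, is
nonnegative. As `d_a` and `λ_e` are only continuous on `[0, ∞)`, the argument is run for the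
game in which they are evaluated at `max x 0`; on feasible flows it has the same costs.
-/

theorem HasDerivAt.nonneg_of_isMinOn_Icc {φ : ℝ → ℝ} {φ' δ : ℝ} (hφ : HasDerivAt φ φ' 0)
    (hδ : 0 < δ) (hmin : IsMinOn φ (Set.Icc 0 δ) 0) : 0 ≤ φ' := by
  have hcone : δ ∈ posTangentConeAt (Set.Icc 0 δ) (0 : ℝ) :=
    mem_posTangentConeAt_of_segment_subset (by simp [segment_eq_Icc hδ.le])
  have := hmin.localize.hasFDerivWithinAt_nonneg hφ.hasFDerivAt.hasFDerivWithinAt hcone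
  exact nonneg_of_mul_nonneg_right (by simpa [mul_comm] using this) hδ

theorem hasDerivAt_integral_add_mul {φ : ℝ → ℝ} (hφ : Continuous φ) (x c : ℝ) :
    HasDerivAt (fun ε => ∫ u in (0 : ℝ)..x + ε * c, φ u) (φ x * c) 0 := by
  simpa [Function.comp_def] using (hφ.integral_hasStrictDerivAt 0 (x + 0 * c)).hasDerivAt.comp 0
    ((hasDerivAt_mul_const c).const_add x)

namespace RoutingGame

variable (G : RoutingGame)

section Flows

variable (f v : G.R → Bool → ℝ) (ε : ℝ)

theorem arcFlow_add_smul (a : G.A) (s : Bool) :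
    G.arcFlow (f + ε • v) a s = G.arcFlow f a s + ε * G.arcFlow v a s := by
  simp only [arcFlow, Pi.add_apply, Pi.smul_apply, smul_eq_mul, mul_add, sum_add_distrib,
    mul_sum, mul_left_comm ε]

theorem totFlow_add_smul (a : G.A) :
    G.totFlow (f + ε • v) a = G.totFlow f a + ε * G.totFlow v a := by
  simp only [totFlow, arcFlow_add_smul]
  ring

theorem Lneed_add_smul (s : Bool) :
    G.Lneed (f + ε • v) s = G.Lneed f s + ε * G.Lneed v s := by
  simp only [Lneed, arcFlow_add_smul, add_mul, sum_add_distrib, mul_assoc, ← mul_sum]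
  ring

end Flows

variable {G}

theorem arcFlow_nonneg {f : G.R → Bool → ℝ} (hf : G.Feasible f) (a : G.A) (s : Bool) :
    0 ≤ G.arcFlow f a s :=
  sum_nonneg fun r _ => mul_nonneg (by rcases G.δ_mem a r with h | h <;> simp [h]) (hf.1 r s)

theorem totFlow_nonneg {f : G.R → Bool → ℝ} (hf : G.Feasible f) (a : G.A) :
    0 ≤ G.totFlow f a :=
  add_nonneg (arcFlow_nonneg hf a true) (arcFlow_nonneg hf a false)

theorem Lneed_nonneg {f : G.R → Bool → ℝ} (hf : G.Feasible f) (s : Bool) :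
    0 ≤ G.Lneed f s :=
  mul_nonneg (G.m_pos s).le <| sum_nonneg fun a _ =>
    mul_nonneg (arcFlow_nonneg hf a s) (G.len_pos a).le

open scoped Classical in
theorem Feasible.le_demand {f : G.R → Bool → ℝ} (hf : G.Feasible f) (r : G.R) (s : Bool) :
    f r s ≤ G.X s * G.D (G.od r) := by
  rw [← hf.2 (G.od r) s]
  simpa using single_le_sum (f := fun p => if G.od p = G.od r then f p s else 0)
    (fun p _ => by split_ifs; exacts [hf.1 p s, le_rfl]) (mem_univ r)

variable (G)

open scoped Classical in
theorem exists_feasible : ∃ f, G.Feasible f := by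
  choose σ hσ using G.od_surj
  refine ⟨fun r s => if r = σ (G.od r) then G.X s * G.D (G.od r) else 0, fun r s => ?_,
    fun k s => ?_⟩
  · dsimp only
    split_ifs
    exacts [mul_nonneg (G.X_nonneg s) (G.D_nonneg _), le_rfl]
  · rw [sum_eq_single (σ k) (fun p _ hp => by split_ifs with h <;> simp_all) (by simp)]
    simp [hσ k]

open scoped Classical in
theorem isClosed_setOf_feasible : IsClosed {f : G.R → Bool → ℝ | G.Feasible f} := by
  simp only [Feasible, Set.ofPred_and, Set.ofPred_forall, ← sum_filter]
  exact (isClosed_iInter fun r => isClosed_iInter fun s => isClosed_le continuous_const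
    (by fun_prop)).inter (isClosed_iInter fun k => isClosed_iInter fun s =>
      isClosed_eq (by fun_prop) continuous_const)

theorem isCompact_setOf_feasible : IsCompact {f : G.R → Bool → ℝ | G.Feasible f} :=
  (isCompact_univ_pi fun r => isCompact_univ_pi fun s =>
    isCompact_Icc (a := 0) (b := G.X s * G.D (G.od r))).of_isClosed_subset
    G.isClosed_setOf_feasible fun _ hf => by
      simpa [Set.mem_univ_pi] using fun r s => And.intro (hf.1 r s) (hf.le_demand r s)

theorem continuous_beckmann (hd : ∀ a, Continuous (G.d a)) (hlame : Continuous G.lame) :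
    Continuous G.Beckmann := by
  have hprim : ∀ φ : ℝ → ℝ, Continuous φ → Continuous fun x => ∫ u in (0 : ℝ)..x, φ u :=
    fun φ hφ => intervalIntegral.continuous_primitive (fun _ _ => hφ.intervalIntegrable _ _) 0
  have hd' := fun a => hprim _ (hd a)
  have hlame' := hprim _ hlame
  unfold Beckmann Lneed totFlow arcFlow
  fun_prop

theorem sum_mul_cost (f v : G.R → Bool → ℝ) :
    ∑ r, ∑ s, v r s * G.cost f r s =
      G.τ * ∑ a, G.d a (G.totFlow f a) * G.totFlow v a
        + ∑ a, ∑ s : Bool, G.toll a s * G.arcFlow v a s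
        + G.lame (G.Lneed f true) * G.Lneed v true + G.lamg * G.Lneed v false := by
  have hclass : ∀ s, ∑ r, v r s * G.cost f r s = ∑ a, G.arcFlow v a s *
      (G.τ * G.d a (G.totFlow f a) + G.toll a s + G.len a * G.m s * G.price f s) := by
    intro s
    simp only [cost, arcFlow, mul_sum, sum_mul]
    rw [sum_comm]
    exact sum_congr rfl fun a _ => sum_congr rfl fun r _ => by ring
  rw [sum_comm, Fintype.sum_bool, hclass, hclass]
  simp only [totFlow, Lneed, price, Fintype.sum_bool, if_true, Bool.false_eq_true, if_false,
    mul_sum, ← sum_add_distrib]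
  exact sum_congr rfl fun a _ => by ring

theorem hasDerivAt_beckmann_add_smul (hd : ∀ a, Continuous (G.d a)) (hlame : Continuous G.lame)
    (f v : G.R → Bool → ℝ) :
    HasDerivAt (fun ε : ℝ => G.Beckmann (f + ε • v)) (∑ r, ∑ s, v r s * G.cost f r s) 0 := by
  have hlin : ∀ x c : ℝ, HasDerivAt (fun ε : ℝ => x + ε * c) c 0 := fun x c =>
    (hasDerivAt_mul_const c).const_add x
  rw [sum_mul_cost]
  simp only [Beckmann, totFlow_add_smul, arcFlow_add_smul, Lneed_add_smul]
  exact ((((HasDerivAt.fun_sum fun a _ => hasDerivAt_integral_add_mul (hd a) _ _).const_mul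
    G.τ).add (HasDerivAt.fun_sum fun a _ => HasDerivAt.fun_sum fun s _ =>
      (hlin _ _).const_mul _)).add (hasDerivAt_integral_add_mul hlame _ _)).add
    ((hlin _ _).const_mul _)

open scoped Classical in
noncomputable def unitFlow (r : G.R) (s : Bool) : G.R → Bool → ℝ :=
  fun p t => if p = r ∧ t = s then 1 else 0

theorem sum_unitFlow_mul (r : G.R) (s : Bool) (c : G.R → Bool → ℝ) :
    ∑ p, ∑ t, G.unitFlow r s p t * c p t = c r s := by
  classical
  simp [unitFlow, ite_and]

variable {G}

theorem Feasible.add_smul_unitFlow_sub {f : G.R → Bool → ℝ} (hf : G.Feasible f) {r r' : G.R}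
    (hod : G.od r = G.od r') {s : Bool} {ε : ℝ} (hε : ε ∈ Set.Icc 0 (f r s)) :
    G.Feasible (f + ε • (G.unitFlow r' s - G.unitFlow r s)) := by
  classical
  refine ⟨fun p t => ?_, fun k t => ?_⟩
  · have hr : ε * G.unitFlow r s p t ≤ f p t := by
      by_cases hp : p = r ∧ t = s
      · obtain ⟨rfl, rfl⟩ := hp
        simpa [unitFlow] using hε.2
      · simpa [unitFlow, hp] using hf.1 p t
    have hr' : 0 ≤ ε * G.unitFlow r' s p t := by
      unfold unitFlow
      split_ifs <;> simp [hε.1]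
    simp only [Pi.add_apply, Pi.smul_apply, Pi.sub_apply, smul_eq_mul]
    linarith
  · have hunit : ∀ q, (∑ p, if G.od p = k then G.unitFlow q s p t else 0) =
        if G.od q = k ∧ t = s then 1 else 0 := fun q => by
      rw [sum_eq_single q (fun p _ hp => by simp [unitFlow, hp]) (by simp)]
      simp [unitFlow, ite_and]
    calc (∑ p, if G.od p = k then (f + ε • (G.unitFlow r' s - G.unitFlow r s)) p t else 0)
        = (∑ p, if G.od p = k then f p t else 0) + ε * ((∑ p, if G.od p = k then
            G.unitFlow r' s p t else 0) - ∑ p, if G.od p = k then G.unitFlow r s p t else 0) := by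
          rw [← sum_sub_distrib, mul_sum, ← sum_add_distrib]
          refine sum_congr rfl fun p _ => ?_
          split_ifs <;> simp
      _ = G.X t * G.D k := by rw [hunit, hunit, hod, sub_self, mul_zero, add_zero, hf.2 k t]

theorem cost_le_of_isMinOn_beckmann (hd : ∀ a, Continuous (G.d a)) (hlame : Continuous G.lame)
    {f : G.R → Bool → ℝ} (hf : G.Feasible f) (hmin : IsMinOn G.Beckmann {f | G.Feasible f} f)
    {s : Bool} {r r' : G.R} (hod : G.od r = G.od r') (hpos : 0 < f r s) :
    G.cost f r s ≤ G.cost f r' s := by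
  have hderiv := G.hasDerivAt_beckmann_add_smul hd hlame f (G.unitFlow r' s - G.unitFlow r s)
  simp only [Pi.sub_apply, sub_mul, sum_sub_distrib, sum_unitFlow_mul] at hderiv
  refine sub_nonneg.1 (hderiv.nonneg_of_isMinOn_Icc hpos fun ε hε => ?_)
  simpa using hmin (hf.add_smul_unitFlow_sub hod hε)

variable (G)

theorem exists_isWE_of_continuous (hd : ∀ a, Continuous (G.d a)) (hlame : Continuous G.lame) :
    ∃ f, G.IsWE f := by
  obtain ⟨f, hf, hmin⟩ := G.isCompact_setOf_feasible.exists_isMinOn G.exists_feasible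
    (G.continuous_beckmann hd hlame).continuousOn
  exact ⟨f, hf, fun s r r' hod hpos => cost_le_of_isMinOn_beckmann hd hlame hf hmin hod hpos⟩

def clamp : RoutingGame :=
  { G with
    d := fun a x => G.d a (max x 0)
    lame := fun x => G.lame (max x 0) }

theorem continuous_clamp_d (hd : ∀ a, ContinuousOn (G.d a) (Set.Ici 0)) (a : G.A) :
    Continuous (G.clamp.d a) :=
  (hd a).comp_continuous (continuous_id.max continuous_const) fun x => le_max_right x 0

theorem continuous_clamp_lame (hlame : ContinuousOn G.lame (Set.Ici 0)) :
    Continuous G.clamp.lame :=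
  hlame.comp_continuous (continuous_id.max continuous_const) fun x => le_max_right x 0

variable {G}

theorem cost_clamp {f : G.R → Bool → ℝ} (hf : G.Feasible f) (r : G.R) (s : Bool) :
    G.clamp.cost f r s = G.cost f r s := by
  have htot : G.clamp.totFlow f = G.totFlow f := rfl
  have hneed : G.clamp.Lneed f = G.Lneed f := rfl
  have hd : ∀ a, G.clamp.d a (G.totFlow f a) = G.d a (G.totFlow f a) := fun a =>
    congrArg (G.d a) (max_eq_left (totFlow_nonneg hf a))
  have hlame : G.clamp.lame (G.Lneed f true) = G.lame (G.Lneed f true) :=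
    congrArg G.lame (max_eq_left (Lneed_nonneg hf true))
  simp only [cost, price, htot, hneed, hd, hlame]
  rfl

theorem IsWE.of_clamp {f : G.R → Bool → ℝ} (h : G.clamp.IsWE f) : G.IsWE f := by
  have hf : G.Feasible f := h.1
  refine ⟨hf, fun s r r' hod hpos => ?_⟩
  rw [← cost_clamp hf, ← cost_clamp hf]
  exact h.2 s r r' hod hpos

end RoutingGame

/-- Prop. 4, existence: if the travel-time functions and the charging
unit price are continuous, a Wardrop Equilibrium exists. -/
theorem exists_WE (G : RoutingGame)
    (hd : ∀ a, ContinuousOn (G.d a) (Set.Ici 0))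
    (hlame : ContinuousOn G.lame (Set.Ici 0)) :
    ∃ f : G.R → Bool → ℝ, G.IsWE f := by
  obtain ⟨f, hf⟩ :=
    G.clamp.exists_isWE_of_continuous (G.continuous_clamp_d hd) (G.continuous_clamp_lame hlame)
  exact ⟨f, hf.of_clamp⟩
end
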